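/- arXiv:0709.3374 — 2 statements merged into one kernel-verified Lean document; each statement's English description precedes it below -/
import Mathlib

section
/- Let k > 2 be an integer, let F and F* be defining series with tube model, and let Φ = (φ, ψ) be a formal transformation mapping F to F*. Then there exist a unique real number δ ≠ 0 and a unique normalizing transformation (z + f, w + g) such that φ(z,w) = δ·(z + f(z,w)) and ψ(z,w) = δ^k·(w + g(z,w)). -/
noncomputable section

open MvPowerSeries Finsupp

/-- Formal substitution of the family `a` into `f`, defined coefficientwise by a `finsum`
(which has the correct value whenever each `a i` has zero constant term). -/
def mSubst {σ τ R : Type*} [CommSemiring R] (a : σ → MvPowerSeries τ R)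
    (f : MvPowerSeries σ R) : MvPowerSeries τ R :=
  fun d => finsum fun e : σ →₀ ℕ =>
    MvPowerSeries.coeff (R := R) e f * MvPowerSeries.coeff (R := R) d (e.prod fun i n => (a i) ^ n)

/-- Coefficientwise real part. -/
def reP {σ : Type*} (h : MvPowerSeries σ ℂ) : MvPowerSeries σ ℝ :=
  fun d => (MvPowerSeries.coeff (R := ℂ) d h).re

/-- Coefficientwise imaginary part. -/
def imP {σ : Type*} (h : MvPowerSeries σ ℂ) : MvPowerSeries σ ℝ :=
  fun d => (MvPowerSeries.coeff (R := ℂ) d h).im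

/-- Complexification of a real power series. -/
def toC {σ : Type*} (F : MvPowerSeries σ ℝ) : MvPowerSeries σ ℂ :=
  MvPowerSeries.map (σ := σ) Complex.ofRealHom F

/-- The coefficient of `x^j y^l u^m` in `F ∈ ℝ⟦x,y,u⟧`. -/
def cf3 (F : MvPowerSeries (Fin 3) ℝ) (j l m : ℕ) : ℝ :=
  MvPowerSeries.coeff (R := ℝ) (single 0 j + single 1 l + single 2 m) F

/-- The coefficient of `z^j w^m` in `h ∈ ℂ⟦z,w⟧`. -/
def cf2 (h : MvPowerSeries (Fin 2) ℂ) (j m : ℕ) : ℂ :=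
  MvPowerSeries.coeff (R := ℂ) (single 0 j + single 1 m) h

/-- The family `(x+iy, u+iF)` to be substituted into series in `ℂ⟦z,w⟧`. -/
def tubeFam (F : MvPowerSeries (Fin 3) ℝ) : Fin 2 → MvPowerSeries (Fin 3) ℂ :=
  ![X 0 + MvPowerSeries.C (σ := Fin 3) (R := ℂ) Complex.I * X 1,
    X 2 + MvPowerSeries.C (σ := Fin 3) (R := ℂ) Complex.I * toC F]

/-- `(φ,ψ)` maps the series `F` to the series `F*`:
`F*(Re φ(x+iy,u+iF), Im φ(x+iy,u+iF), Re ψ(x+iy,u+iF)) = Im ψ(x+iy,u+iF)`. -/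
def MapsSeries (F Fs : MvPowerSeries (Fin 3) ℝ) (φ ψ : MvPowerSeries (Fin 2) ℂ) : Prop :=
  mSubst ![reP (mSubst (tubeFam F) φ), imP (mSubst (tubeFam F) φ),
           reP (mSubst (tubeFam F) ψ)] Fs
    = imP (mSubst (tubeFam F) ψ)

/-- `(φ,ψ)` is a formal transformation: zero constant terms and invertible Jacobian at `0`. -/
def IsFormalTransf (φ ψ : MvPowerSeries (Fin 2) ℂ) : Prop :=
  cf2 φ 0 0 = 0 ∧ cf2 ψ 0 0 = 0 ∧
  cf2 φ 1 0 * cf2 ψ 0 1 - cf2 φ 0 1 * cf2 ψ 1 0 ≠ 0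

/-- `F` is a defining series with tube model:
`F = x^k + Σ_{j+l+km ≥ k+1} A_{j,l,m} x^j y^l u^m`. -/
def IsDefining (k : ℕ) (F : MvPowerSeries (Fin 3) ℝ) : Prop :=
  ∀ j l m : ℕ, j + l + k * m ≤ k →
    cf3 F j l m = if j = k ∧ l = 0 ∧ m = 0 then 1 else 0

/-- `F` is in t-normal form. -/
def IsTNormal (k : ℕ) (F : MvPowerSeries (Fin 3) ℝ) : Prop :=
  (∀ j l m : ℕ, k + 1 ≤ j + l + k * m → (j = 0 ∨ j = 1 ∨ j = k - 1 ∨ j = k) →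
      cf3 F j l m = 0) ∧
  (∀ m : ℕ, cf3 F (2 * k - 1) 0 m = 0 ∧ cf3 F (2 * k - 1) 1 m = 0)

/-- `(φ,ψ) = (z+f, w+g)` is a normalizing transformation: `f` contains only terms of
weight `≥ 2` and `g` only terms of weight `≥ k+1`. -/
def IsNormalizing (k : ℕ) (φ ψ : MvPowerSeries (Fin 2) ℂ) : Prop :=
  (∀ j m : ℕ, j + k * m ≤ 1 → cf2 φ j m = if j = 1 ∧ m = 0 then 1 else 0) ∧
  (∀ j m : ℕ, j + k * m ≤ k → cf2 ψ j m = if j = 0 ∧ m = 1 then 1 else 0)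

/-!
Compare the coefficients of weight at most `k` (weights `1, 1, k` for `x, y, u`) in the mapping
equation. Write `c_j` for the coefficient of `z^j` in `ψ`, `e` for that of `w`, and
`α + iβ` for the coefficient of `z` in `φ`. Modulo weight `> k` the right-hand side is
`Im (Σ_{j ≤ k} c_j (x+iy)^j + e (u + i x^k))`, and, as long as `Re ψ(x+iy, u+iF)` has weighted
order at least the weight considered, the left-hand side is `(Re φ(x+iy, u+iF))^k`, which agrees
with `(αx - βy)^k` up to weight `k`. Below weight `k` the left-hand side vanishes, so induction on
`j < k` gives `c_j = 0`. At weight `k` the monomials `x^k, x^(k-1) y, x^(k-2) y^2, x^(k-3) y^3, u`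
give five real equations forcing `β = 0`, `c_k = 0` and `e = α^k`. With `δ = α`, the pair
`(φ/δ, ψ/δ^k)` is normalizing, and it is unique because a normalizing `φ` has `z`-coefficient `1`.
-/

section WeightedOrder

variable {σ R : Type*} [CommSemiring R] (w : σ → ℕ)

lemma coeff_eq_zero_of_weight_lt {f : MvPowerSeries σ R} {n : ℕ}
    (hf : (n : ℕ∞) ≤ f.weightedOrder w) {d : σ →₀ ℕ} (hd : weight w d < n) : coeff d f = 0 :=
  coeff_eq_zero_of_lt_weightedOrder w ((Nat.cast_lt.mpr hd).trans_le hf)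

lemma le_weightedOrder_mul_of_le {f g : MvPowerSeries σ R} {m n : ℕ∞}
    (hf : m ≤ f.weightedOrder w) (hg : n ≤ g.weightedOrder w) :
    m + n ≤ (f * g).weightedOrder w :=
  (add_le_add hf hg).trans (le_weightedOrder_mul w)

lemma le_weightedOrder_pow_of_le {f : MvPowerSeries σ R} {m : ℕ∞}
    (hf : m ≤ f.weightedOrder w) (n : ℕ) : n * m ≤ (f ^ n).weightedOrder w := by
  rw [← nsmul_eq_mul]
  exact (nsmul_le_nsmul_right hf n).trans (le_weightedOrder_pow w n)

lemma weight_le_of_coeff_prod_pow_ne_zero {ι : Type*} {a : ι → MvPowerSeries σ R} (v : ι → ℕ)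
    (ha : ∀ i, (v i : ℕ∞) ≤ (a i).weightedOrder w) {e : ι →₀ ℕ} {d : σ →₀ ℕ}
    (h : coeff d (e.prod fun i n => a i ^ n) ≠ 0) : weight v e ≤ weight w d := by
  have hprod : (weight v e : ℕ∞) ≤ (e.prod fun i n => a i ^ n).weightedOrder w := by
    refine le_trans ?_ (le_weightedOrder_prod w _ e.support)
    rw [weight_apply, Finsupp.sum, Nat.cast_sum]
    exact Finset.sum_le_sum fun i _ => by
      simpa using le_weightedOrder_pow_of_le w (ha i) (e i)
  exact_mod_cast hprod.trans (weightedOrder_le w h)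

lemma le_weightedOrder_pow_sub_pow {R : Type*} [CommRing R] {P L : MvPowerSeries σ R}
    (hL : 1 ≤ L.weightedOrder w) (hPL : 2 ≤ (P - L).weightedOrder w) (n : ℕ) :
    ((n + 1 : ℕ) : ℕ∞) ≤ (P ^ n - L ^ n).weightedOrder w := by
  have hP : 1 ≤ P.weightedOrder w := by
    have := min_weightedOrder_le_add w (f := L) (g := P - L)
    rw [add_sub_cancel] at this
    exact le_trans (le_min hL (le_trans (by norm_num) hPL)) this
  induction n with
  | zero => simp
  | succ n ih =>
    have hsplit : P ^ (n + 1) - L ^ (n + 1) = P * (P ^ n - L ^ n) + (P - L) * L ^ n := by ring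
    rw [hsplit]
    refine le_trans (le_min ?_ ?_) (min_weightedOrder_le_add w)
    · calc ((n + 1 + 1 : ℕ) : ℕ∞) = 1 + ((n + 1 : ℕ) : ℕ∞) := by push_cast; ring
        _ ≤ _ := le_weightedOrder_mul_of_le w hP ih
    · calc ((n + 1 + 1 : ℕ) : ℕ∞) = 2 + n * 1 := by push_cast; ring
        _ ≤ _ := le_weightedOrder_mul_of_le w hPL (le_weightedOrder_pow_of_le w hL n)

end WeightedOrder

@[simp]
lemma coeff_reP {σ : Type*} (f : MvPowerSeries σ ℂ) (d : σ →₀ ℕ) :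
    coeff d (reP f) = (coeff d f).re := rfl

@[simp]
lemma coeff_imP {σ : Type*} (f : MvPowerSeries σ ℂ) (d : σ →₀ ℕ) :
    coeff d (imP f) = (coeff d f).im := rfl

lemma le_weightedOrder_reP {σ : Type*} (w : σ → ℕ) (f : MvPowerSeries σ ℂ) :
    f.weightedOrder w ≤ (reP f).weightedOrder w :=
  le_weightedOrder w fun d hd => by
    simp [coeff_eq_zero_of_lt_weightedOrder w hd]

lemma le_weightedOrder_imP {σ : Type*} (w : σ → ℕ) (f : MvPowerSeries σ ℂ) :
    f.weightedOrder w ≤ (imP f).weightedOrder w :=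
  le_weightedOrder w fun d hd => by
    simp [coeff_eq_zero_of_lt_weightedOrder w hd]

lemma reP_sub {σ : Type*} (f g : MvPowerSeries σ ℂ) : reP (f - g) = reP f - reP g := by
  ext d
  simp

lemma eq_single_zero_add_single_one_iff {d : Fin 3 →₀ ℕ} {m l : ℕ} :
    d = single 0 m + single 1 l ↔ d 0 = m ∧ d 1 = l ∧ d 2 = 0 := by
  constructor
  · rintro rfl
    simp
  · rintro ⟨h0, h1, h2⟩
    ext i
    fin_cases i <;> simp [h0, h1, h2]

lemma coeff_linear_pow {R : Type*} [CommSemiring R] (a b : R) (n : ℕ) (d : Fin 3 →₀ ℕ) :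
    coeff d ((C a * X 0 + C b * X 1) ^ n) =
      if d 0 + d 1 = n ∧ d 2 = 0 then n.choose (d 1) * a ^ d 0 * b ^ d 1 else 0 := by
  have hterm : ∀ m ∈ Finset.range (n + 1), (C a * X 0) ^ m * (C b * X 1) ^ (n - m) *
      (n.choose m : MvPowerSeries (Fin 3) R) =
      monomial (single 0 m + single 1 (n - m)) (a ^ m * b ^ (n - m) * n.choose m) := by
    intro m _
    simp only [mul_pow, ← map_pow, X_pow_eq, ← map_natCast (C (σ := Fin 3) (R := R))]
    simp only [← monomial_zero_eq_C_apply, monomial_mul_monomial, zero_add, add_zero, mul_one]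
  rw [add_pow, Finset.sum_congr rfl hterm, map_sum]
  simp only [coeff_monomial, eq_single_zero_add_single_one_iff]
  split_ifs with hd
  · obtain ⟨hn, h2⟩ := hd
    rw [Finset.sum_eq_single_of_mem (d 0) (by simp; omega) fun m _ hm => if_neg (by tauto),
      if_pos ⟨rfl, by omega, h2⟩, ← hn, Nat.add_sub_cancel_left, Nat.choose_symm_add]
    ring
  · exact Finset.sum_eq_zero fun m hm => if_neg (by simp at hm; omega)

abbrev tubeWeight (k : ℕ) : Fin 3 → ℕ := ![1, 1, k]

lemma weight_tubeWeight (k : ℕ) (d : Fin 3 →₀ ℕ) :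
    weight (tubeWeight k) d = d 0 + d 1 + k * d 2 := by
  simp [weight_apply, Finsupp.sum_fintype, Fin.sum_univ_three, mul_comm]

lemma one_le_weightedOrder_linear {R : Type*} [CommSemiring R] (k : ℕ) (a b : R) :
    1 ≤ (C a * X 0 + C b * X 1 : MvPowerSeries (Fin 3) R).weightedOrder (tubeWeight k) :=
  nat_le_weightedOrder _ fun d hd => by
    rw [← pow_one (C a * X 0 + C b * X 1), coeff_linear_pow, if_neg]
    rw [weight_tubeWeight] at hd
    omega

lemma cf3_apply_eq_coeff (F : MvPowerSeries (Fin 3) ℝ) (d : Fin 3 →₀ ℕ) :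
    cf3 F (d 0) (d 1) (d 2) = coeff d F := by
  rw [cf3]
  congr 2
  ext i
  fin_cases i <;> simp

lemma eq_single_zero_iff {d : Fin 3 →₀ ℕ} {m : ℕ} :
    d = single 0 m ↔ d 0 = m ∧ d 1 = 0 ∧ d 2 = 0 := by
  simpa using eq_single_zero_add_single_one_iff (d := d) (m := m) (l := 0)

lemma IsDefining.coeff_eq {k : ℕ} {F : MvPowerSeries (Fin 3) ℝ} (hF : IsDefining k F)
    {d : Fin 3 →₀ ℕ} (hd : weight (tubeWeight k) d ≤ k) :
    coeff d F = if d = single 0 k then 1 else 0 := by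
  simp only [← cf3_apply_eq_coeff, eq_single_zero_iff]
  exact hF _ _ _ (weight_tubeWeight k d ▸ hd)

lemma coeff_mSubst {σ τ R : Type*} [CommSemiring R] (a : σ → MvPowerSeries τ R)
    (f : MvPowerSeries σ R) (d : τ →₀ ℕ) :
    coeff d (mSubst a f) = ∑ᶠ e, coeff e f * coeff d (e.prod fun i n => a i ^ n) := rfl

section TubeSubstitution

variable {k : ℕ} {F : MvPowerSeries (Fin 3) ℝ}

lemma tubeFam_zero_eq (F : MvPowerSeries (Fin 3) ℝ) :
    tubeFam F 0 = C 1 * X 0 + C Complex.I * X 1 := by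
  simp [tubeFam]

lemma coeff_tubeFam_zero_pow (F : MvPowerSeries (Fin 3) ℝ) (n : ℕ) (d : Fin 3 →₀ ℕ) :
    coeff d (tubeFam F 0 ^ n) =
      if d 0 + d 1 = n ∧ d 2 = 0 then n.choose (d 1) * Complex.I ^ d 1 else 0 := by
  rw [tubeFam_zero_eq, coeff_linear_pow]
  simp

lemma one_le_weightedOrder_tubeFam_zero : 1 ≤ (tubeFam F 0).weightedOrder (tubeWeight k) :=
  tubeFam_zero_eq F ▸ one_le_weightedOrder_linear k 1 Complex.I

lemma coeff_tubeFam_one (hF : IsDefining k F) {d : Fin 3 →₀ ℕ}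
    (hd : weight (tubeWeight k) d ≤ k) :
    coeff d (tubeFam F 1) =
      if d = single 2 1 then 1 else if d = single 0 k then Complex.I else 0 := by
  have hFd := hF.coeff_eq hd
  simp only [tubeFam, Matrix.cons_val_one, Matrix.cons_val_zero, map_add, coeff_C_mul, toC,
    coeff_map, hFd, coeff_X]
  split_ifs <;> simp_all [single_eq_single_iff]

lemma le_weightedOrder_tubeFam_one (hF : IsDefining k F) :
    (k : ℕ∞) ≤ (tubeFam F 1).weightedOrder (tubeWeight k) :=
  nat_le_weightedOrder _ fun d hd => by
    rw [coeff_tubeFam_one hF hd.le, if_neg, if_neg] <;>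
      rintro rfl <;> simp [weight_tubeWeight] at hd

lemma prod_pow_tubeFam (F : MvPowerSeries (Fin 3) ℝ) (e : Fin 2 →₀ ℕ) :
    (e.prod fun i n => tubeFam F i ^ n) = tubeFam F 0 ^ e 0 * tubeFam F 1 ^ e 1 := by
  rw [prod_fintype _ _ fun _ => pow_zero _, Fin.prod_univ_two]

lemma eq_single_of_coeff_prod_pow_tubeFam_ne_zero (hk : 0 < k) (hF : IsDefining k F)
    {d : Fin 3 →₀ ℕ} (hd : weight (tubeWeight k) d ≤ k) {e : Fin 2 →₀ ℕ}
    (hc : coeff d (e.prod fun i m => tubeFam F i ^ m) ≠ 0) :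
    e = single 0 (weight (tubeWeight k) d) ∨ e = single 1 1 := by
  have hwd := weight_tubeWeight k d
  have hw := weight_le_of_coeff_prod_pow_ne_zero (tubeWeight k) ![1, k]
    (Fin.forall_fin_two.mpr ⟨by simpa using one_le_weightedOrder_tubeFam_zero,
      by simpa using le_weightedOrder_tubeFam_one hF⟩) hc
  rw [show weight ![1, k] e = e 0 + k * e 1 by simp [weight_apply, sum_fintype, mul_comm]] at hw
  rw [prod_pow_tubeFam] at hc
  simp only [Finsupp.ext_iff, Fin.forall_fin_two]
  rcases Nat.eq_zero_or_pos (e 1) with he1 | he1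
  · rw [he1, pow_zero, mul_one, coeff_tubeFam_zero_pow] at hc
    have hd2 : d 0 + d 1 = e 0 ∧ d 2 = 0 := of_not_not fun hne => hc (if_neg hne)
    rw [hd2.2, mul_zero] at hwd
    left
    simp only [single_apply, if_true, if_false, Fin.isValue, zero_ne_one]
    omega
  · have h1 : e 1 = 1 := by
      by_contra hne
      have := Nat.mul_le_mul_left k (show 2 ≤ e 1 by omega)
      omega
    rw [h1, mul_one] at hw
    right
    simp only [single_apply, if_true, if_false, Fin.isValue, one_ne_zero]
    omega

lemma coeff_mSubst_tubeFam (hk : 0 < k) (hF : IsDefining k F) (h : MvPowerSeries (Fin 2) ℂ)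
    {d : Fin 3 →₀ ℕ} (hd : weight (tubeWeight k) d ≤ k) :
    coeff d (mSubst (tubeFam F) h) =
      cf2 h (weight (tubeWeight k) d) 0 * coeff d (tubeFam F 0 ^ weight (tubeWeight k) d) +
        cf2 h 0 1 * coeff d (tubeFam F 1) := by
  have hsupp : (Function.support fun e : Fin 2 →₀ ℕ =>
      coeff e h * coeff d (e.prod fun i m => tubeFam F i ^ m)) ⊆
        ↑({single 0 (weight (tubeWeight k) d), single 1 1} : Finset (Fin 2 →₀ ℕ)) :=
    fun e he => by
      simpa using eq_single_of_coeff_prod_pow_tubeFam_ne_zero hk hF hd (right_ne_zero_of_mul he)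
  rw [coeff_mSubst, finsum_eq_finsetSum_of_support_subset _ hsupp,
    Finset.sum_pair (by simp [single_eq_single_iff]), prod_pow_tubeFam, prod_pow_tubeFam]
  simp [cf2]

lemma coeff_mSubst_tubeFam_xy (hk : 0 < k) (hF : IsDefining k F) (h : MvPowerSeries (Fin 2) ℂ)
    {a b : ℕ} (hab : a + b ≤ k) (ha : a < k) :
    coeff (single 0 a + single 1 b) (mSubst (tubeFam F) h) =
      cf2 h (a + b) 0 * ((a + b).choose b * Complex.I ^ b) := by
  have hw : weight (tubeWeight k) (single 0 a + single 1 b) = a + b := by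
    simp [weight_tubeWeight]
  rw [coeff_mSubst_tubeFam hk hF h (hw ▸ hab), coeff_tubeFam_one hF (hw ▸ hab), if_neg, if_neg,
    hw, coeff_tubeFam_zero_pow]
  · simp
  · simp [eq_single_zero_iff]
    omega
  · intro h2
    simpa using DFunLike.congr_fun h2 2

lemma coeff_mSubst_tubeFam_xk (hk : 0 < k) (hF : IsDefining k F) (h : MvPowerSeries (Fin 2) ℂ) :
    coeff (single 0 k) (mSubst (tubeFam F) h) = cf2 h k 0 + Complex.I * cf2 h 0 1 := by
  have hw : weight (tubeWeight k) (single 0 k) = k := by simp [weight_tubeWeight]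
  rw [coeff_mSubst_tubeFam hk hF h hw.le, coeff_tubeFam_one hF hw.le, hw, coeff_tubeFam_zero_pow]
  simp [single_eq_single_iff, mul_comm]

lemma coeff_mSubst_tubeFam_u (hk : 0 < k) (hF : IsDefining k F) (h : MvPowerSeries (Fin 2) ℂ) :
    coeff (single 2 1) (mSubst (tubeFam F) h) = cf2 h 0 1 := by
  have hw : weight (tubeWeight k) (single 2 1) = k := by simp [weight_tubeWeight]
  rw [coeff_mSubst_tubeFam hk hF h hw.le, coeff_tubeFam_one hF hw.le, hw, coeff_tubeFam_zero_pow]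
  simp

lemma le_weightedOrder_mSubst_tubeFam (hk : 0 < k) (hF : IsDefining k F)
    {h : MvPowerSeries (Fin 2) ℂ} {n : ℕ} (hn : n ≤ k) (hlow : ∀ j < n, cf2 h j 0 = 0) :
    (n : ℕ∞) ≤ (mSubst (tubeFam F) h).weightedOrder (tubeWeight k) :=
  nat_le_weightedOrder _ fun d hd => by
    rw [coeff_mSubst_tubeFam hk hF h (by omega), hlow _ hd,
      coeff_eq_zero_of_weight_lt _ (le_weightedOrder_tubeFam_one hF) (by omega)]
    simp

lemma one_le_weightedOrder_mSubst_tubeFam (hk : 0 < k) (hF : IsDefining k F)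
    {h : MvPowerSeries (Fin 2) ℂ} (h0 : cf2 h 0 0 = 0) :
    1 ≤ (mSubst (tubeFam F) h).weightedOrder (tubeWeight k) := by
  exact_mod_cast le_weightedOrder_mSubst_tubeFam hk hF hk (n := 1) (by simpa using h0)

lemma two_le_weightedOrder_mSubst_tubeFam_sub (hk : 2 ≤ k) (hF : IsDefining k F)
    {h : MvPowerSeries (Fin 2) ℂ} (h0 : cf2 h 0 0 = 0) :
    2 ≤ (mSubst (tubeFam F) h - C (cf2 h 1 0) * tubeFam F 0).weightedOrder (tubeWeight k) :=
  nat_le_weightedOrder (n := 2) _ fun d hd => by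
    rw [map_sub, coeff_C_mul, coeff_mSubst_tubeFam (by omega) hF h (by omega),
      coeff_eq_zero_of_weight_lt _ (le_weightedOrder_tubeFam_one hF) (by omega), mul_zero,
      add_zero]
    rcases (show weight (tubeWeight k) d = 0 ∨ weight (tubeWeight k) d = 1 by omega) with
      hw | hw
    · rw [hw, h0, coeff_eq_zero_of_weight_lt _ (one_le_weightedOrder_tubeFam_zero (k := k))
        (by omega)]
      simp
    · rw [hw, pow_one, sub_self]

lemma reP_C_mul_tubeFam_zero (F : MvPowerSeries (Fin 3) ℝ) (a : ℂ) :
    reP (C a * tubeFam F 0) = C a.re * X 0 + C (-a.im) * X 1 := by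
  ext d
  simp only [tubeFam, Matrix.cons_val_zero, mul_add, ← mul_assoc, ← map_mul, map_add,
    coeff_C_mul, coeff_X, coeff_reP]
  split_ifs <;> simp

end TubeSubstitution

lemma coeff_mSubst_of_isDefining {k : ℕ} {Fs : MvPowerSeries (Fin 3) ℝ} (hFs : IsDefining k Fs)
    {P Q R : MvPowerSeries (Fin 3) ℝ} (hP : 1 ≤ P.weightedOrder (tubeWeight k))
    (hQ : 1 ≤ Q.weightedOrder (tubeWeight k)) {d : Fin 3 →₀ ℕ}
    (hR : (weight (tubeWeight k) d : ℕ∞) ≤ R.weightedOrder (tubeWeight k))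
    (h1 : 1 ≤ weight (tubeWeight k) d) (hd : weight (tubeWeight k) d ≤ k) :
    coeff d (mSubst ![P, Q, R] Fs) = coeff d (P ^ k) := by
  set n := weight (tubeWeight k) d
  have hsupp : (Function.support fun e : Fin 3 →₀ ℕ =>
      coeff e Fs * coeff d (e.prod fun i m => ![P, Q, R] i ^ m)) ⊆
        ↑({single 0 k} : Finset (Fin 3 →₀ ℕ)) := by
    intro e he
    have hw := weight_le_of_coeff_prod_pow_ne_zero (tubeWeight k) ![1, 1, n]
      (by intro i; fin_cases i <;> simpa) (right_ne_zero_of_mul he)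
    rw [show weight ![1, 1, n] e = e 0 + e 1 + n * e 2 by
      simp [weight_apply, sum_fintype, Fin.sum_univ_three, mul_comm]] at hw
    have he2 : e 2 = 0 ∨ e 2 = 1 := by
      by_contra! hne
      have := Nat.mul_le_mul_left n (show 2 ≤ e 2 by omega)
      omega
    have hwe : weight (tubeWeight k) e ≤ k := by
      rw [weight_tubeWeight]
      rcases he2 with he2 | he2 <;> rw [he2] at hw ⊢ <;> omega
    have hFe := left_ne_zero_of_mul he
    rw [hFs.coeff_eq hwe] at hFe
    simpa using of_not_not fun hne => hFe (if_neg hne)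
  have hk : weight (tubeWeight k) (single 0 k : Fin 3 →₀ ℕ) ≤ k := by simp [weight_tubeWeight]
  rw [coeff_mSubst, finsum_eq_finsetSum_of_support_subset _ hsupp, Finset.sum_singleton,
    hFs.coeff_eq hk, if_pos rfl, one_mul, prod_single_index (by simp)]
  rfl

lemma eq_of_tube_weight_k_relations {k : ℕ} (hk : 2 < k) {α β : ℝ} {c e : ℂ}
    (hαβ : α ≠ 0 ∨ β ≠ 0) (he : e ≠ 0)
    (h0 : α ^ k = c.im + e.re) (h1 : α ^ (k - 1) * β = -c.re)
    (h2 : α ^ (k - 2) * β ^ 2 = -c.im) (h3 : α ^ (k - 3) * β ^ 3 = c.re) (hu : e.im = 0) :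
    β = 0 ∧ c = 0 ∧ e = (α : ℂ) ^ k := by
  obtain ⟨m, rfl⟩ : ∃ m, k = m + 3 := ⟨k - 3, by omega⟩
  simp only [show m + 3 - 1 = m + 2 by omega, show m + 3 - 2 = m + 1 by omega,
    Nat.add_sub_cancel] at h1 h2 h3
  have hβ : β = 0 := by
    have hz : α ^ m * (β * (α ^ 2 + β ^ 2)) = 0 := by linear_combination h3 + h1
    rcases mul_eq_zero.mp hz with hα | hz
    · have hα := eq_zero_of_pow_eq_zero hα
      subst hα
      refine absurd (Complex.ext ?_ hu) he
      rw [zero_pow (by omega)] at h0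
      rw [zero_pow (by omega), zero_mul] at h2
      simp only [Complex.zero_re]
      linarith
    · rcases mul_eq_zero.mp hz with hβ | hsq
      · exact hβ
      · have hα : α = 0 := by nlinarith
        have hβ : β = 0 := by nlinarith
        exact absurd hαβ (by simp [hα, hβ])
  subst hβ
  refine ⟨rfl, Complex.ext (by simpa using h1.symm) (by simpa using h2.symm), ?_⟩
  refine Complex.ext ?_ ?_
  · simp only [← Complex.ofReal_pow, Complex.ofReal_re]
    linarith
  · simpa [← Complex.ofReal_pow] using hu

section MapsSeries

variable {k : ℕ} {F Fs : MvPowerSeries (Fin 3) ℝ} {φ ψ : MvPowerSeries (Fin 2) ℂ}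

lemma MapsSeries.coeff_reP_pow_eq_im (hmap : MapsSeries F Fs φ ψ) (hk : 0 < k)
    (hF : IsDefining k F) (hFs : IsDefining k Fs) (hφ0 : cf2 φ 0 0 = 0) {d : Fin 3 →₀ ℕ}
    (hR : (weight (tubeWeight k) d : ℕ∞) ≤
      (reP (mSubst (tubeFam F) ψ)).weightedOrder (tubeWeight k))
    (h1 : 1 ≤ weight (tubeWeight k) d) (hd : weight (tubeWeight k) d ≤ k) :
    coeff d (reP (mSubst (tubeFam F) φ) ^ k) = (coeff d (mSubst (tubeFam F) ψ)).im := by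
  have hS := one_le_weightedOrder_mSubst_tubeFam hk hF hφ0
  rw [← coeff_imP, ← hmap, coeff_mSubst_of_isDefining hFs (hS.trans (le_weightedOrder_reP _ _))
    (hS.trans (le_weightedOrder_imP _ _)) hR h1 hd]

lemma MapsSeries.cf2_snd_eq_zero_of_lt (hmap : MapsSeries F Fs φ ψ) (hk : 0 < k)
    (hF : IsDefining k F) (hFs : IsDefining k Fs) (hφ0 : cf2 φ 0 0 = 0)
    (hψ0 : cf2 ψ 0 0 = 0) : ∀ j < k, cf2 ψ j 0 = 0 := by
  intro j
  induction j using Nat.strong_induction_on with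
  | _ j ih =>
  intro hj
  rcases j with _ | i
  · exact hψ0
  have hR : ((i + 1 : ℕ) : ℕ∞) ≤ (reP (mSubst (tubeFam F) ψ)).weightedOrder (tubeWeight k) :=
    (le_weightedOrder_mSubst_tubeFam hk hF hj.le fun j hj' => ih j hj' (by omega)).trans
      (le_weightedOrder_reP _ _)
  have hPk := le_weightedOrder_pow_of_le _
    ((one_le_weightedOrder_mSubst_tubeFam hk hF hφ0).trans (le_weightedOrder_reP _ _)) k
  rw [mul_one] at hPk
  have him_eq_zero : ∀ d : Fin 3 →₀ ℕ, weight (tubeWeight k) d = i + 1 →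
      (coeff d (mSubst (tubeFam F) ψ)).im = 0 := fun d hd => by
    rw [← hmap.coeff_reP_pow_eq_im hk hF hFs hφ0 (hd ▸ hR) (by omega) (by omega),
      coeff_eq_zero_of_weight_lt _ hPk (by omega)]
  have him := him_eq_zero (single 0 (i + 1) + single 1 0) (by simp [weight_tubeWeight])
  have hre := him_eq_zero (single 0 i + single 1 1) (by simp [weight_tubeWeight])
  rw [coeff_mSubst_tubeFam_xy hk hF ψ (by omega) (by omega)] at him hre
  -- the right-hand sides are `Im c` and `(i + 1) Re c` for `c = cf2 ψ (i + 1) 0`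
  simp at him hre
  exact Complex.ext (hre.resolve_right (by positivity)) him

lemma MapsSeries.coeff_linear_pow_eq_im (hmap : MapsSeries F Fs φ ψ) (hk : 2 ≤ k)
    (hF : IsDefining k F) (hFs : IsDefining k Fs) (hφ0 : cf2 φ 0 0 = 0) (hψ0 : cf2 ψ 0 0 = 0)
    {d : Fin 3 →₀ ℕ} (hd : weight (tubeWeight k) d = k) :
    coeff d ((C (cf2 φ 1 0).re * X 0 + C (-(cf2 φ 1 0).im) * X 1) ^ k) =
      (coeff d (mSubst (tubeFam F) ψ)).im := by
  have hk0 : 0 < k := by omega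
  have hR : (k : ℕ∞) ≤ (reP (mSubst (tubeFam F) ψ)).weightedOrder (tubeWeight k) :=
    (le_weightedOrder_mSubst_tubeFam hk0 hF le_rfl
      (hmap.cf2_snd_eq_zero_of_lt hk0 hF hFs hφ0 hψ0)).trans (le_weightedOrder_reP _ _)
  have hlin : 2 ≤ (reP (mSubst (tubeFam F) φ) -
      (C (cf2 φ 1 0).re * X 0 + C (-(cf2 φ 1 0).im) * X 1)).weightedOrder (tubeWeight k) := by
    rw [← reP_C_mul_tubeFam_zero, ← reP_sub]
    exact (two_le_weightedOrder_mSubst_tubeFam_sub hk hF hφ0).trans (le_weightedOrder_reP _ _)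
  have hpow := le_weightedOrder_pow_sub_pow _ (one_le_weightedOrder_linear k _ _) hlin k
  rw [← hmap.coeff_reP_pow_eq_im hk0 hF hFs hφ0 (by rw [hd]; exact hR) (by omega) hd.le,
    eq_comm, ← sub_eq_zero, ← map_sub]
  exact coeff_eq_zero_of_weight_lt _ hpow (by omega)

lemma MapsSeries.exists_real_dilation (hmap : MapsSeries F Fs φ ψ) (hk : 2 < k)
    (hF : IsDefining k F) (hFs : IsDefining k Fs) (hφ0 : cf2 φ 0 0 = 0) (hψ0 : cf2 ψ 0 0 = 0)
    (hφ1 : cf2 φ 1 0 ≠ 0) (hψ1 : cf2 ψ 0 1 ≠ 0) :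
    ∃ δ : ℝ, cf2 φ 1 0 = δ ∧ cf2 ψ k 0 = 0 ∧ cf2 ψ 0 1 = (δ : ℂ) ^ k := by
  have hk0 : 0 < k := by omega
  have heq := fun d => hmap.coeff_linear_pow_eq_im (d := d) hk.le hF hFs hφ0 hψ0
  have e0 := heq (single 0 k) (by simp [weight_tubeWeight])
  have e1 := heq (single 0 (k - 1) + single 1 1) (by simp [weight_tubeWeight]; omega)
  have e2 := heq (single 0 (k - 2) + single 1 2) (by simp [weight_tubeWeight]; omega)
  have e3 := heq (single 0 (k - 3) + single 1 3) (by simp [weight_tubeWeight]; omega)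
  have eu := heq (single 2 1) (by simp [weight_tubeWeight])
  rw [coeff_mSubst_tubeFam_xk hk0 hF] at e0
  rw [coeff_mSubst_tubeFam_xy hk0 hF ψ (by omega) (by omega)] at e1 e2 e3
  rw [coeff_mSubst_tubeFam_u hk0 hF] at eu
  simp only [coeff_linear_pow] at e0 e1 e2 e3 eu
  simp [Nat.sub_add_cancel (by omega : 1 ≤ k), Nat.sub_add_cancel (by omega : 2 ≤ k),
    Nat.sub_add_cancel (by omega : 3 ≤ k)] at e0 e1 e2 e3 eu
  have hk1 : (k : ℝ) ≠ 0 := by positivity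
  have hk2 : (k.choose 2 : ℝ) ≠ 0 := Nat.cast_ne_zero.mpr (Nat.choose_pos (by omega)).ne'
  have hk3 : (k.choose 3 : ℝ) ≠ 0 := Nat.cast_ne_zero.mpr (Nat.choose_pos (by omega)).ne'
  obtain ⟨hβ, hc, he⟩ := eq_of_tube_weight_k_relations hk
    (by simpa [Complex.ext_iff, or_iff_not_imp_left] using hφ1) hψ1 e0
    (mul_left_cancel₀ hk1 (by linear_combination -e1))
    (mul_left_cancel₀ hk2 (by linear_combination e2))
    (mul_left_cancel₀ hk3 (by linear_combination -e3)) eu.symm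
  exact ⟨_, Complex.ext rfl (by simpa using hβ), hc, he⟩

end MapsSeries

lemma cf2_C_mul (c : ℂ) (h : MvPowerSeries (Fin 2) ℂ) (j m : ℕ) :
    cf2 (C c * h) j m = c * cf2 h j m :=
  coeff_C_mul _ _ _

lemma isNormalizing_of_cf2 {k : ℕ} (hk : 1 < k) {φ ψ : MvPowerSeries (Fin 2) ℂ}
    (hφ0 : cf2 φ 0 0 = 0) (hφ1 : cf2 φ 1 0 = 1) (hψ : ∀ j ≤ k, cf2 ψ j 0 = 0)
    (hψ1 : cf2 ψ 0 1 = 1) : IsNormalizing k φ ψ := by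
  constructor
  · intro j m hjm
    obtain ⟨rfl, hj | hj⟩ : m = 0 ∧ (j = 0 ∨ j = 1) := by
      rcases m with _ | m
      · omega
      · nlinarith
    · simp [hj, hφ0]
    · simp [hj, hφ1]
  · intro j m hjm
    obtain ⟨rfl, hj⟩ | ⟨rfl, rfl⟩ : m = 0 ∧ j ≤ k ∨ m = 1 ∧ j = 0 := by
      rcases m with _ | _ | m
      · omega
      · omega
      · nlinarith
    · simp [hψ j hj]
    · simp [hψ1]

lemma existsUnique_dilation_normalizing {k : ℕ} (hk : 1 < k) {φ ψ : MvPowerSeries (Fin 2) ℂ}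
    {δ : ℝ} (hδ : δ ≠ 0) (hφ0 : cf2 φ 0 0 = 0) (hφ1 : cf2 φ 1 0 = δ)
    (hψ : ∀ j ≤ k, cf2 ψ j 0 = 0) (hψ1 : cf2 ψ 0 1 = (δ : ℂ) ^ k) :
    ∃! p : ℝ × (MvPowerSeries (Fin 2) ℂ × MvPowerSeries (Fin 2) ℂ),
      p.1 ≠ 0 ∧ IsNormalizing k p.2.1 p.2.2 ∧
      φ = C (p.1 : ℂ) * p.2.1 ∧ ψ = C ((p.1 : ℂ) ^ k) * p.2.2 := by
  have hδC : (δ : ℂ) ≠ 0 := Complex.ofReal_ne_zero.mpr hδ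
  have hδk : (δ : ℂ) ^ k ≠ 0 := pow_ne_zero k hδC
  refine ⟨(δ, C (δ : ℂ)⁻¹ * φ, C ((δ : ℂ) ^ k)⁻¹ * ψ), ⟨hδ, ?_, ?_, ?_⟩, ?_⟩
  · refine isNormalizing_of_cf2 hk ?_ ?_ (fun j hj => ?_) ?_
    all_goals simp [cf2_C_mul, hφ0, hφ1, hψ1, hδC]
    simp [hψ j hj]
  · rw [← mul_assoc, ← map_mul, mul_inv_cancel₀ hδC, map_one, one_mul]
  · rw [← mul_assoc, ← map_mul, mul_inv_cancel₀ hδk, map_one, one_mul]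
  · rintro ⟨δ', χ, ω⟩ ⟨-, hN, rfl, rfl⟩
    have hδ' : δ' = δ := by
      have := hN.1 1 0 (by simp)
      simp only [and_self, if_true] at this
      rw [cf2_C_mul, this, mul_one] at hφ1
      exact_mod_cast hφ1
    subst hδ'
    simp only [← mul_assoc, ← map_mul, inv_mul_cancel₀ hδC, inv_mul_cancel₀ hδk, map_one,
      one_mul]

/-- factorization of form-preserving maps: any formal transformation mapping
one defining series with tube model to another factors uniquely as a dilation
`(δz, δ^k w)` followed by a normalizing transformation. -/
theorem formalTransf_factorization (k : ℕ) (hk : 2 < k)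
    (F Fs : MvPowerSeries (Fin 3) ℝ) (hF : IsDefining k F) (hFs : IsDefining k Fs)
    (φ ψ : MvPowerSeries (Fin 2) ℂ) (hΦ : IsFormalTransf φ ψ)
    (hmap : MapsSeries F Fs φ ψ) :
    ∃! p : ℝ × (MvPowerSeries (Fin 2) ℂ × MvPowerSeries (Fin 2) ℂ),
      p.1 ≠ 0 ∧ IsNormalizing k p.2.1 p.2.2 ∧
      φ = MvPowerSeries.C (σ := Fin 2) (R := ℂ) (p.1 : ℂ) * p.2.1 ∧
      ψ = MvPowerSeries.C (σ := Fin 2) (R := ℂ) ((p.1 : ℂ) ^ k) * p.2.2 := by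
  obtain ⟨hφ0, hψ0, hJ⟩ := hΦ
  have hlow := hmap.cf2_snd_eq_zero_of_lt (by omega) hF hFs hφ0 hψ0
  rw [hlow 1 (by omega), mul_zero, sub_zero] at hJ
  obtain ⟨δ, hφ1, hψk, hψ1⟩ := hmap.exists_real_dilation hk hF hFs hφ0 hψ0
    (left_ne_zero_of_mul hJ) (right_ne_zero_of_mul hJ)
  have hδ : δ ≠ 0 := by
    rintro rfl
    exact hJ (by simp [hφ1])
  refine existsUnique_dilation_normalizing (by omega) hδ hφ0 hφ1 (fun j hj => ?_) hψ1
  rcases hj.lt_or_eq with hj | rfl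
  exacts [hlow j hj, hψk]
end
end

section
/- Let k > 2 be an integer and let F be real-analytic in a neighborhood of 0 ∈ ℝ with F(x) = x^k + o(x^k). Let a denote the (2k−1)-st Taylor coefficient of F at 0 and set h = −a/k. Then there exists a function F*, real-analytic in a neighborhood of 0, with F*(x) = x^k + o(x^k) and with vanishing (2k−1)-st Taylor coefficient at 0, such that F*(x − h·F(x)) = F(x) for all x in some neighborhood of 0; consequently the biholomorphism Φ(z,w) = (z + ihw, w) maps T_F into T_{F*} near the origin: there is an open neighborhood U of 0 in ℂ² with Φ(T_F ∩ U) ⊆ T_{F*}. -/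
noncomputable section

open Complex

/-- The tube hypersurface over the graph of `h` (on all of `ℝ`). -/
def TubeAll (h : ℝ → ℝ) : Set (ℂ × ℂ) :=
  {p : ℂ × ℂ | p.2.im = h p.1.re}

/-!
The shear `φ(x) = x - h F(x)` is tangent to the identity at `0`, so it has an analytic local
inverse `ψ`, and `F* := F ∘ ψ` satisfies `F* ∘ φ = F` and `F* ~ x^k`. The second-order Taylor
estimate for `F*` between `x` and `φ(x)`, where `φ(x) - x = -h F(x) = O(x^k)` and
`F*'(x) ~ k x^(k-1)`, gives `F*(x) = F(x) + h k x^(2k-1) + o(x^(2k-1))`. An analytic function that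
is `o(x^n)` has vanishing Taylor coefficients up to order `n`, so the `(2k-1)`-st coefficient of
`F*` is `a + h k = 0`. On the tube, `Φ` acts on `Re z` by the same shear.
-/

open Filter Asymptotics Topology

section AnalyticOrder

variable {𝕜 E : Type*} [NontriviallyNormedField 𝕜] [NormedAddCommGroup E] [NormedSpace 𝕜 E]
  {f : 𝕜 → E}

theorem isBigO_pow_pow_of_le {m n : ℕ} (h : m ≤ n) :
    (fun z : 𝕜 => z ^ n) =O[𝓝 0] fun z => z ^ m := by
  rcases h.lt_or_eq with h | rfl
  · exact (isLittleO_pow_pow h).isBigO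
  · exact isBigO_refl _ _

theorem AnalyticAt.isBigO_pow_of_natCast_le_analyticOrderAt (hf : AnalyticAt 𝕜 f 0) {n : ℕ}
    (hn : n ≤ analyticOrderAt f 0) : f =O[𝓝 0] fun z => z ^ n := by
  obtain ⟨g, hg, hfg⟩ := (natCast_le_analyticOrderAt hf).mp hn
  have hg_bdd : g =O[𝓝 0] fun _ => (1 : 𝕜) := hg.continuousAt.tendsto.isBigO_one 𝕜
  refine ((isBigO_refl (fun z : 𝕜 => z ^ n) _).smul hg_bdd).congr' ?_ (by simp)
  filter_upwards [hfg] with z hz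
  rw [hz, sub_zero]

theorem AnalyticAt.natCast_lt_analyticOrderAt_of_isLittleO (hf : AnalyticAt 𝕜 f 0) {n : ℕ}
    (ho : f =o[𝓝 0] fun z => z ^ n) : n < analyticOrderAt f 0 := by
  by_contra! hle
  obtain ⟨m, hm⟩ := ENat.ne_top_iff_exists.mp (ne_top_of_le_ne_top (ENat.natCast_ne_top n) hle)
  obtain ⟨g, hg, hg0, hfg⟩ := hf.analyticOrderAt_eq_natCast.mp hm.symm
  have hmn : m ≤ n := by exact_mod_cast hm ▸ hle
  have hg_large : ∀ᶠ z in 𝓝 0, ‖g 0‖ / 2 ≤ ‖g z‖ :=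
    hg.continuousAt.norm.eventually (le_mem_nhds (half_lt_self (norm_pos_iff.mpr hg0)))
  have hpow_f : (fun z : 𝕜 => z ^ m) =O[𝓝 0] f := by
    refine IsBigO.of_bound (2 / ‖g 0‖) ?_
    filter_upwards [hfg, hg_large] with z hz hgz
    rw [hz, sub_zero, norm_smul]
    calc ‖z ^ m‖ = 2 / ‖g 0‖ * (‖z ^ m‖ * (‖g 0‖ / 2)) := by
          field_simp [norm_ne_zero_iff.mpr hg0]
      _ ≤ 2 / ‖g 0‖ * (‖z ^ m‖ * ‖g z‖) := by gcongr
  have hfreq : ∃ᶠ z in 𝓝 (0 : 𝕜), z ^ m ≠ 0 :=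
    ((eventually_mem_nhdsWithin (s := {0}ᶜ)).frequently.filter_mono nhdsWithin_le_nhds).mono
      fun z hz => pow_ne_zero m hz
  exact isLittleO_irrefl hfreq
    ((hpow_f.trans_isLittleO ho).trans_isBigO (isBigO_pow_pow_of_le hmn))

variable [CharZero 𝕜] [CompleteSpace E]

theorem AnalyticAt.iteratedDeriv_eq_zero_of_isLittleO (hf : AnalyticAt 𝕜 f 0) {n : ℕ}
    (ho : f =o[𝓝 0] fun z => z ^ n) {i : ℕ} (hi : i ≤ n) : iteratedDeriv i f 0 = 0 :=
  (natCast_le_analyticOrderAt_iff_iteratedDeriv_eq_zero hf).mp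
    (Order.add_one_le_of_lt (hf.natCast_lt_analyticOrderAt_of_isLittleO ho)) i
    (Nat.lt_succ_of_le hi)

theorem AnalyticAt.deriv_isLittleO_pow (hf : AnalyticAt 𝕜 f 0) {n : ℕ}
    (ho : f =o[𝓝 0] fun z => z ^ (n + 1)) : deriv f =o[𝓝 0] fun z => z ^ n := by
  have hord : ((n + 1 : ℕ) : ℕ∞) ≤ analyticOrderAt (deriv f) 0 := by
    rw [natCast_le_analyticOrderAt_iff_iteratedDeriv_eq_zero hf.deriv]
    intro i hi
    rw [← iteratedDeriv_succ']
    exact hf.iteratedDeriv_eq_zero_of_isLittleO ho (by omega)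
  exact (hf.deriv.isBigO_pow_of_natCast_le_analyticOrderAt hord).trans_isLittleO
    (isLittleO_pow_pow (Nat.lt_succ_self n))

end AnalyticOrder

theorem AnalyticAt.isEquivalent_deriv_of_isEquivalent_pow {𝕜 : Type*} [NontriviallyNormedField 𝕜]
    [CharZero 𝕜] [CompleteSpace 𝕜] {f : 𝕜 → 𝕜} (hf : AnalyticAt 𝕜 f 0) {n : ℕ}
    (he : f ~[𝓝 0] fun z => z ^ (n + 1)) : deriv f ~[𝓝 0] fun z => (n + 1) * z ^ n := by
  have hsub :
      deriv (fun z => f z - z ^ (n + 1)) =ᶠ[𝓝 0] fun z => deriv f z - (n + 1) * z ^ n := by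
    filter_upwards [hf.eventually_analyticAt] with z hz
    rw [deriv_fun_sub hz.differentiableAt (differentiableAt_pow _), (hasDerivAt_pow _ z).deriv]
    push_cast; ring
  have ho := (hf.sub (analyticAt_id.pow _)).deriv_isLittleO_pow he.isLittleO
  exact (ho.congr' hsub (by rfl)).trans_isBigO
    (isBigO_self_const_mul (Nat.cast_add_one_ne_zero n) _ _)

theorem AnalyticAt.isBigO_sub_sub_smul_deriv {𝕜 F : Type*} [RCLike 𝕜] [NormedAddCommGroup F]
    [NormedSpace 𝕜 F] [CompleteSpace F] {f : 𝕜 → F} {x₀ : 𝕜} (hf : AnalyticAt 𝕜 f x₀)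
    {α : Type*} {l : Filter α} {u v : α → 𝕜} (hu : Tendsto u l (𝓝 x₀)) (hv : Tendsto v l (𝓝 x₀)) :
    (fun t => f (v t) - f (u t) - (v t - u t) • deriv f (u t)) =O[l] fun t => (v t - u t) ^ 2 := by
  obtain ⟨K, s, hs, hK⟩ := (hf.deriv.contDiffAt (n := 1)).exists_lipschitzOnWith
  obtain ⟨ε, hε, hball⟩ := Metric.mem_nhds_iff.mp (inter_mem hs hf.eventually_analyticAt)
  refine IsBigO.of_bound K ?_
  filter_upwards [hu (Metric.ball_mem_nhds _ hε), hv (Metric.ball_mem_nhds _ hε)] with t hut hvt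
  set a := u t
  set b := v t
  -- Mean value inequality for `y ↦ f y - y • f' a`: by the Lipschitz bound on `f'`, its
  -- derivative is at most `K ‖b - a‖` on the part of the ball within `‖b - a‖` of `a`.
  have hmvt := ((convex_ball x₀ ε).inter
      (convex_closedBall a ‖b - a‖)).norm_image_sub_le_of_norm_hasDerivWithin_le
    (f := fun y => f y - y • deriv f a) (f' := fun y => deriv f y - deriv f a) (C := K * ‖b - a‖)
    (fun y hy => by
      simpa using ((hball hy.1).2.differentiableAt.hasDerivAt.fun_sub
        ((hasDerivAt_id y).smul_const (deriv f a))).hasDerivWithinAt)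
    (fun y hy => by
      refine (hK.norm_sub_le (hball hy.1).1 (hball hut).1).trans ?_
      gcongr
      simpa [dist_eq_norm] using hy.2)
    ⟨hut, Metric.mem_closedBall_self (norm_nonneg _)⟩
    ⟨hvt, Metric.mem_closedBall.mpr (dist_eq_norm b a).le⟩
  calc ‖f b - f a - (b - a) • deriv f a‖
      = ‖f b - b • deriv f a - (f a - a • deriv f a)‖ := by rw [sub_smul]; congr 1; abel
    _ ≤ K * ‖b - a‖ * ‖b - a‖ := hmvt
    _ = K * ‖(b - a) ^ 2‖ := by rw [norm_pow, sq, mul_assoc]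

theorem AnalyticAt.exists_analyticAt_leftInverse_of_deriv_eq_one {𝕜 : Type*}
    [NontriviallyNormedField 𝕜] [CompleteSpace 𝕜] [CharZero 𝕜] {φ : 𝕜 → 𝕜}
    (hφ : AnalyticAt 𝕜 φ 0) (hφ0 : φ 0 = 0) (hφ' : deriv φ 0 = 1) :
    ∃ ψ : 𝕜 → 𝕜, AnalyticAt 𝕜 ψ 0 ∧ HasDerivAt ψ 1 0 ∧ ∀ᶠ x in 𝓝 0, ψ (φ x) = x := by
  have hne : deriv φ 0 ≠ 0 := by rw [hφ']; exact one_ne_zero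
  refine ⟨hφ.hasStrictDerivAt.localInverse _ _ _ hne, ?_, ?_,
    hφ.hasStrictDerivAt.eventually_left_inverse hne⟩
  · simpa [hφ0] using hφ.analyticAt_localInverse hne
  · simpa [hφ0, hφ'] using (hφ.hasStrictDerivAt.to_localInverse hne).hasDerivAt

section Shear

variable {k : ℕ} {F : ℝ → ℝ}

theorem exists_analyticAt_comp_shear_eq (hk : 1 < k) (hFan : AnalyticAt ℝ F 0)
    (hF : F ~[𝓝 0] fun x => x ^ k) (h : ℝ) :
    ∃ Fs : ℝ → ℝ, AnalyticAt ℝ Fs 0 ∧ (Fs ~[𝓝 0] fun x => x ^ k) ∧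
      ∀ᶠ x in 𝓝 0, Fs (x - h * F x) = F x := by
  have hF_o : F =o[𝓝 0] fun x => x := hF.isBigO.trans_isLittleO (isLittleO_pow_id hk)
  have hF0 : F 0 = 0 := hF_o.isBigO.eq_zero_imp.self_of_nhds rfl
  have hF' : HasDerivAt F 0 0 :=
    hasDerivAt_iff_isLittleO_nhds_zero.mpr (by simpa [hF0] using hF_o)
  have hφ' : HasDerivAt (fun x => x - h * F x) 1 0 := by
    simpa using (hasDerivAt_id' 0).fun_sub (hF'.const_mul h)
  obtain ⟨ψ, hψan, hψ', hψφ⟩ := AnalyticAt.exists_analyticAt_leftInverse_of_deriv_eq_one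
    (φ := fun x => x - h * F x) (by fun_prop) (by simp [hF0]) hφ'.deriv
  have hψ0 : ψ 0 = 0 := by simpa [hF0] using hψφ.self_of_nhds
  have hψ : ψ ~[𝓝 0] fun y => y := by
    refine (hasDerivAt_iff_isLittleO_nhds_zero.mp hψ').congr_left fun y => ?_
    simp [hψ0]
  have hψ_tendsto : Tendsto ψ (𝓝 0) (𝓝 0) := by simpa [hψ0] using hψan.continuousAt.tendsto
  refine ⟨F ∘ ψ, hFan.comp_of_eq hψan hψ0, (hF.comp_tendsto hψ_tendsto).trans (hψ.pow k), ?_⟩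
  filter_upwards [hψφ] with x hx
  simp [hx]

theorem isLittleO_sub_sub_of_comp_shear_eq (hk : k ≠ 0) {Fs : ℝ → ℝ} {h : ℝ}
    (hF : F ~[𝓝 0] fun x => x ^ k) (hFsan : AnalyticAt ℝ Fs 0) (hFs : Fs ~[𝓝 0] fun x => x ^ k)
    (hFFs : ∀ᶠ x in 𝓝 0, Fs (x - h * F x) = F x) :
    (fun x => Fs x - F x - h * k * x ^ (2 * k - 1)) =o[𝓝 0] fun x => x ^ (2 * k - 1) := by
  obtain ⟨m, rfl⟩ := Nat.exists_eq_add_one_of_ne_zero hk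
  have hpow : ∀ x : ℝ, x ^ (m + 1) * x ^ m = x ^ (2 * (m + 1) - 1) := fun x => by
    rw [← pow_add]; congr 1; omega
  have hprod : (fun x => F x * deriv Fs x - (m + 1) * x ^ (2 * (m + 1) - 1)) =o[𝓝 0]
      fun x => x ^ (2 * (m + 1) - 1) := by
    refine ((hF.mul (hFsan.isEquivalent_deriv_of_isEquivalent_pow hFs)).isLittleO.congr'
      (.of_eq ?_) (.of_eq ?_)).trans_isBigO (isBigO_const_mul_self ((m : ℝ) + 1) _ _) <;>
    · ext x; simp only [Pi.mul_apply, Pi.sub_apply, ← hpow]; ring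
  have hsq : (fun x => (x - h * F x - x) ^ 2) =o[𝓝 0] fun x => x ^ (2 * (m + 1) - 1) := by
    refine (((hF.isBigO.pow 2).const_mul_left (h ^ 2)).congr' (.of_eq ?_) (.of_eq ?_)
      ).trans_isLittleO (isLittleO_pow_pow (by omega : 2 * (m + 1) - 1 < 2 * (m + 1)))
    · ext x; ring
    · ext x; rw [← pow_mul]; ring_nf
  have hF_tendsto : Tendsto F (𝓝 0) (𝓝 0) :=
    hF.symm.tendsto_nhds ((continuous_pow (m + 1)).tendsto' 0 0 (by simp))
  have htaylor := hFsan.isBigO_sub_sub_smul_deriv (u := fun x => x) (v := fun x => x - h * F x)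
    tendsto_id (by simpa using tendsto_id.sub (hF_tendsto.const_mul h))
  refine ((htaylor.trans_isLittleO hsq).neg_left.add (hprod.const_mul_left h)).congr' ?_ (by rfl)
  filter_upwards [hFFs] with x hx
  rw [hx, smul_eq_mul]
  push_cast
  ring

theorem iteratedDeriv_eq_of_comp_shear_eq (hk : k ≠ 0) {Fs : ℝ → ℝ} {h : ℝ}
    (hFan : AnalyticAt ℝ F 0) (hF : F ~[𝓝 0] fun x => x ^ k) (hFsan : AnalyticAt ℝ Fs 0)
    (hFs : Fs ~[𝓝 0] fun x => x ^ k) (hFFs : ∀ᶠ x in 𝓝 0, Fs (x - h * F x) = F x) :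
    iteratedDeriv (2 * k - 1) Fs 0 =
      iteratedDeriv (2 * k - 1) F 0 + h * k * (2 * k - 1).factorial := by
  have hE : AnalyticAt ℝ (fun x => Fs x - F x - h * k * x ^ (2 * k - 1)) 0 := by fun_prop
  have h0 := hE.iteratedDeriv_eq_zero_of_isLittleO
    (isLittleO_sub_sub_of_comp_shear_eq hk hF hFsan hFs hFFs) le_rfl
  rw [iteratedDeriv_fun_sub (hFsan.fun_sub hFan).contDiffAt (by fun_prop),
    iteratedDeriv_fun_sub hFsan.contDiffAt hFan.contDiffAt, iteratedDeriv_const_mul_field,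
    iteratedDeriv_fun_pow_zero, if_pos rfl] at h0
  linarith

end Shear

theorem shear_mem_tubeAll {F Fs : ℝ → ℝ} {h : ℝ} {p : ℂ × ℂ} (hp : p ∈ TubeAll F)
    (hFFs : Fs (p.1.re - h * F p.1.re) = F p.1.re) :
    (p.1 + Complex.I * h * p.2, p.2) ∈ TubeAll Fs := by
  simp only [TubeAll, Set.mem_ofPred_eq] at hp ⊢
  simp [hp, ← sub_eq_add_neg, hFFs]

/-- Corollary 5.1, convergent t-normalization of a tube: for `F` real-analytic
near `0` with `F(x) = x^k + o(x^k)`, letting `a` be the `(2k-1)`-st Taylor coefficient of `F`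
and `h = -a/k`, there is `F*` real-analytic near `0`, with `F*(x) = x^k + o(x^k)` and vanishing
`(2k-1)`-st Taylor coefficient, with `F*(x - h·F(x)) = F(x)` near `0`; consequently
`Φ(z,w) = (z + ihw, w)` maps `T_F` into `T_{F*}` near the origin. -/
theorem tube_convergent_tNormalForm (k : ℕ) (hk : 2 < k)
    (F : ℝ → ℝ) (hFan : AnalyticAt ℝ F 0)
    (hFk : (fun x => F x - x ^ k) =o[nhds (0:ℝ)] fun x => x ^ k) :
    ∀ a h : ℝ,
      a = iteratedDeriv (2 * k - 1) F 0 / (Nat.factorial (2 * k - 1)) →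
      h = -a / k →
      ∃ Fs : ℝ → ℝ, AnalyticAt ℝ Fs 0 ∧
        ((fun x => Fs x - x ^ k) =o[nhds (0:ℝ)] fun x => x ^ k) ∧
        iteratedDeriv (2 * k - 1) Fs 0 / (Nat.factorial (2 * k - 1)) = 0 ∧
        (∃ ε > (0:ℝ), ∀ x : ℝ, |x| < ε → Fs (x - h * F x) = F x) ∧
        ∃ U : Set (ℂ × ℂ), IsOpen U ∧ ((0 : ℂ), (0 : ℂ)) ∈ U ∧
          ∀ p ∈ TubeAll F ∩ U,
            (p.1 + Complex.I * (h : ℂ) * p.2, p.2) ∈ TubeAll Fs := by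
  intro a h ha hh
  obtain ⟨Fs, hFsan, hFs, hFFs⟩ := exists_analyticAt_comp_shear_eq (by omega) hFan hFk h
  obtain ⟨ε, hε, hball⟩ := Metric.eventually_nhds_iff.mp hFFs
  have hFFs_ε : ∀ x : ℝ, |x| < ε → Fs (x - h * F x) = F x :=
    fun x hx => hball (by simpa using hx)
  refine ⟨Fs, hFsan, hFs, ?_, ⟨ε, hε, hFFs_ε⟩, {p | |p.1.re| < ε},
    isOpen_lt (Complex.continuous_re.comp continuous_fst).abs continuous_const, by simpa using hε,
    fun p hp => shear_mem_tubeAll hp.1 (hFFs_ε _ hp.2)⟩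
  rw [iteratedDeriv_eq_of_comp_shear_eq (by omega) hFan hFk hFsan hFs hFFs, hh, ha]
  have hk0 : (k : ℝ) ≠ 0 := by positivity
  field_simp
  ring
end
end
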